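/- Let $(a_m)_{m \geq 0}$ be a sequence of nonnegative reals with $\sum_{m=0}^{\infty} a_m = S_2^2 < \infty$, and suppose there is a constant $C > 0$ such that $a_m \leq C (m+1)^{n-1} S_1^2$ for all $m \geq 0$, where $S_1, S_2 > 0$ and $n \geq 2$ is an integer. Then for any $s \in (n/2, n)$, $\sum_{m=0}^{\infty} \frac{a_m}{(m+1)^{2s-n}} \lesssim_{s,C,n} S_1^{2(2s/n - 1)} S_2^{4(1 - s/n)}$, provided $S_2 > S_1$; if $S_2 \leq S_1$ then $\sum_{m=0}^{\infty} \frac{a_m}{(m+1)^{2s-n}} \leq S_2^2$ trivially. -/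

import Mathlib

/-!
Split the weighted sum at `N = ⌈R⌉₊` with `R = (S₂ / S₁) ^ (2 / n)`. Below `N` the pointwise bound
gives terms `≤ C S₁² (m + 1) ^ (α - 1)` with `α = 2 (n - s) > 0`, whose partial sums telescope to
`≲ N ^ α`; above `N` the weight is at most `R ^ (n - 2 s)` and the `a m` sum to `S₂²`. The choice
of `R` makes `S₁² R ^ α = S₂² R ^ (n - 2 s)`, which is the claimed product of powers.
-/

open Real Finset

lemma rpow_sub_one_le_rpow_sub_rpow {α x : ℝ} (hα : 1 ≤ α) (hx : 0 ≤ x) :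
    (x + 1) ^ (α - 1) ≤ (x + 1) ^ α - x ^ α := by
  have hα' : α - 1 + 1 ≠ 0 := by linarith
  have hmono : x ^ (α - 1) ≤ (x + 1) ^ (α - 1) := rpow_le_rpow hx (by linarith) (by linarith)
  have hx1 := rpow_add_one' (by linarith : 0 ≤ x + 1) hα'
  have hx0 := rpow_add_one' hx hα'
  rw [sub_add_cancel] at hx1 hx0
  rw [hx1, hx0]
  nlinarith

lemma mul_rpow_sub_one_le_rpow_sub_rpow {α x : ℝ} (hα₀ : 0 ≤ α) (hα₁ : α ≤ 1) (hx : 0 ≤ x) :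
    α * (x + 1) ^ (α - 1) ≤ (x + 1) ^ α - x ^ α := by
  have hx1 : 0 < x + 1 := by linarith
  have hinv : (x + 1)⁻¹ ≤ 1 := inv_le_one_of_one_le₀ (by linarith)
  -- Bernoulli's inequality for the concave power `t ↦ t ^ α`, at `x / (x + 1) = 1 - (x + 1)⁻¹`
  have hB : (1 + -(x + 1)⁻¹) ^ α ≤ 1 + α * -(x + 1)⁻¹ :=
    rpow_one_add_le_one_add_mul_self (by linarith) hα₀ hα₁
  have hsplit : x = (x + 1) * (1 + -(x + 1)⁻¹) := by field_simp; ring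
  calc α * (x + 1) ^ (α - 1) = (x + 1) ^ α - (x + 1) ^ α * (1 + α * -(x + 1)⁻¹) := by
        rw [rpow_sub_one hx1.ne']; ring
    _ ≤ (x + 1) ^ α - (x + 1) ^ α * (1 + -(x + 1)⁻¹) ^ α := by gcongr
    _ = (x + 1) ^ α - x ^ α := by
        rw [← mul_rpow hx1.le (by linarith), ← hsplit]

lemma min_one_mul_rpow_sub_one_le {α x : ℝ} (hα : 0 < α) (hx : 0 ≤ x) :
    min 1 α * (x + 1) ^ (α - 1) ≤ (x + 1) ^ α - x ^ α := by
  rcases le_total 1 α with h | h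
  · simpa [min_eq_left h] using rpow_sub_one_le_rpow_sub_rpow h hx
  · simpa [min_eq_right h] using mul_rpow_sub_one_le_rpow_sub_rpow hα.le h hx

lemma sum_range_rpow_sub_one_le {α : ℝ} (hα : 0 < α) (N : ℕ) :
    ∑ m ∈ range N, ((m : ℝ) + 1) ^ (α - 1) ≤ (min 1 α)⁻¹ * (N : ℝ) ^ α := by
  have hmin : 0 < min 1 α := lt_min one_pos hα
  rw [le_inv_mul_iff₀ hmin, mul_sum]
  calc ∑ m ∈ range N, min 1 α * ((m : ℝ) + 1) ^ (α - 1)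
      ≤ ∑ m ∈ range N, (((m + 1 : ℕ) : ℝ) ^ α - (m : ℝ) ^ α) := by
        gcongr with m
        push_cast
        exact min_one_mul_rpow_sub_one_le hα m.cast_nonneg
    _ = (N : ℝ) ^ α := by
        rw [sum_range_sub (fun m : ℕ ↦ (m : ℝ) ^ α)]
        simp [zero_rpow hα.ne']

section WeightedSums

variable {a : ℕ → ℝ} {σ : ℝ}

lemma div_succ_rpow_le (ha : ∀ m, 0 ≤ a m) (hσ : 0 ≤ σ) (m : ℕ) :
    a m / ((m : ℝ) + 1) ^ σ ≤ a m :=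
  div_le_self (ha m) (one_le_rpow (by linarith [m.cast_nonneg (α := ℝ)]) hσ)

lemma summable_div_succ_rpow (ha : ∀ m, 0 ≤ a m) (hσ : 0 ≤ σ) (hs : Summable a) :
    Summable fun m ↦ a m / ((m : ℝ) + 1) ^ σ :=
  hs.of_nonneg_of_le (fun m ↦ by have := ha m; positivity) (div_succ_rpow_le ha hσ)

lemma tsum_div_succ_rpow_le_tsum (ha : ∀ m, 0 ≤ a m) (hσ : 0 ≤ σ) (hs : Summable a) :
    ∑' m, a m / ((m : ℝ) + 1) ^ σ ≤ ∑' m, a m :=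
  (summable_div_succ_rpow ha hσ hs).tsum_le_tsum (div_succ_rpow_le ha hσ) hs

lemma tsum_div_succ_rpow_le_sum_range_add (ha : ∀ m, 0 ≤ a m) (hσ : 0 ≤ σ) (hs : Summable a)
    {R : ℝ} (hR : 0 < R) {N : ℕ} (hRN : R ≤ N) :
    ∑' m, a m / ((m : ℝ) + 1) ^ σ ≤
      ∑ m ∈ range N, a m / ((m : ℝ) + 1) ^ σ + R ^ (-σ) * ∑' m, a m := by
  rw [← (summable_div_succ_rpow ha hσ hs).sum_add_tsum_nat_add N]
  gcongr
  have hterm (k : ℕ) : a (k + N) / (((k + N : ℕ) : ℝ) + 1) ^ σ ≤ R ^ (-σ) * a (k + N) := by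
    rw [rpow_neg hR.le, div_eq_inv_mul]
    gcongr
    · exact ha _
    · push_cast; linarith [k.cast_nonneg (α := ℝ)]
  have htail : ∑' k, a (k + N) ≤ ∑' m, a m :=
    ((summable_nat_add_iff N).mpr hs).tsum_le_tsum_of_inj (· + N) (add_left_injective N)
      (fun m _ ↦ ha m) (fun _ ↦ le_rfl) hs
  calc ∑' k, a (k + N) / (((k + N : ℕ) : ℝ) + 1) ^ σ ≤ ∑' k, R ^ (-σ) * a (k + N) :=
        ((summable_nat_add_iff N).mpr (summable_div_succ_rpow ha hσ hs)).tsum_le_tsum hterm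
          (((summable_nat_add_iff N).mpr hs).mul_left _)
    _ ≤ R ^ (-σ) * ∑' m, a m := by
        rw [tsum_mul_left]
        gcongr

lemma sum_range_div_succ_rpow_le {α B : ℝ} (hB : 0 ≤ B) (hα : 0 < α)
    (hbound : ∀ m, a m ≤ B * ((m : ℝ) + 1) ^ (α + σ - 1)) (N : ℕ) :
    ∑ m ∈ range N, a m / ((m : ℝ) + 1) ^ σ ≤ B * (min 1 α)⁻¹ * (N : ℝ) ^ α := by
  calc ∑ m ∈ range N, a m / ((m : ℝ) + 1) ^ σ
      ≤ ∑ m ∈ range N, B * ((m : ℝ) + 1) ^ (α - 1) := by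
        gcongr with m
        have hm : (0 : ℝ) < m + 1 := by positivity
        calc a m / ((m : ℝ) + 1) ^ σ ≤ B * ((m : ℝ) + 1) ^ (α + σ - 1) / ((m : ℝ) + 1) ^ σ := by
              gcongr; exact hbound m
          _ = B * ((m : ℝ) + 1) ^ (α - 1) := by
              rw [mul_div_assoc, ← rpow_sub hm]; ring_nf
    _ ≤ B * (min 1 α)⁻¹ * (N : ℝ) ^ α := by
        rw [← mul_sum, mul_assoc]
        gcongr
        exact sum_range_rpow_sub_one_le hα N

theorem tsum_div_succ_rpow_le_of_le_rpow {α B : ℝ} (ha : ∀ m, 0 ≤ a m) (hs : Summable a)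
    (hB : 0 ≤ B) (hα : 0 < α) (hσ : 0 ≤ σ)
    (hbound : ∀ m, a m ≤ B * ((m : ℝ) + 1) ^ (α + σ - 1)) {R : ℝ} (hR : 1 ≤ R) :
    ∑' m, a m / ((m : ℝ) + 1) ^ σ ≤ B * (min 1 α)⁻¹ * (2 * R) ^ α + R ^ (-σ) * ∑' m, a m := by
  have hN : (⌈R⌉₊ : ℝ) ≤ 2 * R := by linarith [Nat.ceil_lt_add_one (by linarith : 0 ≤ R)]
  calc ∑' m, a m / ((m : ℝ) + 1) ^ σ
      ≤ ∑ m ∈ range ⌈R⌉₊, a m / ((m : ℝ) + 1) ^ σ + R ^ (-σ) * ∑' m, a m :=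
        tsum_div_succ_rpow_le_sum_range_add ha hσ hs (by linarith) (Nat.le_ceil R)
    _ ≤ B * (min 1 α)⁻¹ * (2 * R) ^ α + R ^ (-σ) * ∑' m, a m := by
        grw [sum_range_div_succ_rpow_le hB hα hbound, hN]

end WeightedSums

section CutoffExponents

variable {x y n s : ℝ}

lemma sq_mul_rpow_two_div_eq (hx : 0 < x) (hy : 0 < y) (hn : n ≠ 0) :
    x ^ 2 * ((y / x) ^ (2 / n)) ^ (2 * (n - s)) =
      x ^ (2 * (2 * s / n - 1)) * y ^ (4 * (1 - s / n)) := by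
  rw [← exp_log hx, ← exp_log hy, ← exp_sub, ← exp_mul, ← exp_mul, ← exp_mul, ← exp_mul,
    ← exp_nat_mul, ← exp_add, ← exp_add, exp_eq_exp]
  field_simp
  ring

lemma rpow_two_div_mul_sq_eq (hx : 0 < x) (hy : 0 < y) (hn : n ≠ 0) :
    ((y / x) ^ (2 / n)) ^ (-(2 * s - n)) * y ^ 2 =
      x ^ (2 * (2 * s / n - 1)) * y ^ (4 * (1 - s / n)) := by
  rw [← exp_log hx, ← exp_log hy, ← exp_sub, ← exp_mul, ← exp_mul, ← exp_mul, ← exp_mul,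
    ← exp_nat_mul, ← exp_add, ← exp_add, exp_eq_exp]
  field_simp
  ring

end CutoffExponents

theorem stmt2_general (n : ℕ) (s : ℝ) (hs1 : (n : ℝ) / 2 < s) (hs2 : s < n)
    (C : ℝ) (hC : 0 < C) :
    ∃ K : ℝ, 0 < K ∧ ∀ (a : ℕ → ℝ) (S₁ S₂ : ℝ),
      (∀ m, 0 ≤ a m) → Summable a → (∑' m, a m) = S₂ ^ 2 →
      (∀ m, a m ≤ C * ((m : ℝ) + 1) ^ (n - 1) * S₁ ^ 2) →
      0 < S₁ → 0 < S₂ →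
      ((S₁ < S₂ →
          (∑' m, a m / ((m : ℝ) + 1) ^ (2 * s - (n : ℝ))) ≤
            K * S₁ ^ (2 * (2 * s / n - 1)) * S₂ ^ (4 * (1 - s / n))) ∧
        (S₂ ≤ S₁ →
          (∑' m, a m / ((m : ℝ) + 1) ^ (2 * s - (n : ℝ))) ≤ S₂ ^ 2)) := by
  have hn : (0 : ℝ) < n := by linarith
  have hσ : 0 ≤ 2 * s - n := by linarith
  set α : ℝ := 2 * (n - s)
  refine ⟨C * (min 1 α)⁻¹ * 2 ^ α + 1, by positivity, ?_⟩
  intro a S₁ S₂ ha hs hsum hbound hS₁ hS₂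
  refine ⟨fun hlt ↦ ?_, fun _ ↦ hsum ▸ tsum_div_succ_rpow_le_tsum ha hσ hs⟩
  have hbound' (m : ℕ) : a m ≤ C * S₁ ^ 2 * ((m : ℝ) + 1) ^ (α + (2 * s - n) - 1) := by
    have hexp : α + (2 * s - n) - 1 = ((n - 1 : ℕ) : ℝ) := by
      rw [Nat.cast_pred (Nat.cast_pos.mp hn)]; ring
    rw [hexp, rpow_natCast]
    linarith [hbound m]
  set R : ℝ := (S₂ / S₁) ^ (2 / (n : ℝ))
  have hR : 1 ≤ R := one_le_rpow ((one_le_div hS₁).mpr hlt.le) (by positivity)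
  have hhead : S₁ ^ 2 * R ^ α = S₁ ^ (2 * (2 * s / n - 1)) * S₂ ^ (4 * (1 - s / n)) :=
    sq_mul_rpow_two_div_eq hS₁ hS₂ hn.ne'
  have htail : R ^ (-(2 * s - n)) * S₂ ^ 2 = S₁ ^ (2 * (2 * s / n - 1)) * S₂ ^ (4 * (1 - s / n)) :=
    rpow_two_div_mul_sq_eq hS₁ hS₂ hn.ne'
  calc ∑' m, a m / ((m : ℝ) + 1) ^ (2 * s - n)
      ≤ C * S₁ ^ 2 * (min 1 α)⁻¹ * (2 * R) ^ α + R ^ (-(2 * s - n)) * ∑' m, a m :=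
        tsum_div_succ_rpow_le_of_le_rpow ha hs (by positivity) (by positivity) hσ hbound' hR
    _ = (C * (min 1 α)⁻¹ * 2 ^ α + 1) * S₁ ^ (2 * (2 * s / n - 1)) * S₂ ^ (4 * (1 - s / n)) := by
        rw [mul_rpow zero_le_two (by positivity), hsum]
        linear_combination (C * (min 1 α)⁻¹ * 2 ^ α) * hhead + htail

/-- Spectral-sum bound: if `∑ a_m = S₂²` and `a_m ≤ C (m+1)^{n-1} S₁²`, then for
`s ∈ (n/2, n)` the weighted sum `∑ a_m/(m+1)^{2s-n}` is `≲_{s,C,n} S₁^{2(2s/n-1)} S₂^{4(1-s/n)}`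
when `S₂ > S₁`, and trivially `≤ S₂²` when `S₂ ≤ S₁`. -/
theorem stmt2 (n : ℕ) (hn : 2 ≤ n) (s : ℝ) (hs1 : (n : ℝ) / 2 < s) (hs2 : s < n)
    (C : ℝ) (hC : 0 < C) :
    ∃ K : ℝ, 0 < K ∧ ∀ (a : ℕ → ℝ) (S₁ S₂ : ℝ),
      (∀ m, 0 ≤ a m) → Summable a → (∑' m, a m) = S₂ ^ 2 →
      (∀ m, a m ≤ C * ((m : ℝ) + 1) ^ (n - 1) * S₁ ^ 2) →
      0 < S₁ → 0 < S₂ →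
      ((S₁ < S₂ →
          (∑' m, a m / ((m : ℝ) + 1) ^ (2 * s - (n : ℝ))) ≤
            K * S₁ ^ (2 * (2 * s / n - 1)) * S₂ ^ (4 * (1 - s / n))) ∧
        (S₂ ≤ S₁ →
          (∑' m, a m / ((m : ℝ) + 1) ^ (2 * s - (n : ℝ))) ≤ S₂ ^ 2)) :=
  stmt2_general n s hs1 hs2 C hC
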